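/- The Strang-split Lindblad integrator is completely positive and trace-preserving step by step: Fix γ > 0, Δt > 0 and u ∈ ℝ. For every 2×2 complex matrix ρ: (i) trace(F⁽²⁾(ρ, u)) = trace(ρ); (ii) if ρ is Hermitian then F⁽²⁾(ρ, u) is Hermitian; (iii) if ρ is positive semidefinite then F⁽²⁾(ρ, u) is positive semidefinite. -/

import Mathlib

open Matrix
open scoped ComplexOrder
noncomputable section

/-- Pauli matrix σx. -/
def σx : Matrix (Fin 2) (Fin 2) ℂ := !![0, 1; 1, 0]

/-- The control Hamiltonian H(u) = (u/2) σx. -/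
def Hctrl (u : ℝ) : Matrix (Fin 2) (Fin 2) ℂ := ((u : ℂ) / 2) • σx

/-- Decay probability p(τ) = 1 − e^{−γτ}. -/
def pAD (γ τ : ℝ) : ℝ := 1 - Real.exp (-(γ * τ))

/-- Kraus operator E₀(τ). -/
def E₀ (γ τ : ℝ) : Matrix (Fin 2) (Fin 2) ℂ :=
  !![1, 0; 0, (Real.sqrt (1 - pAD γ τ) : ℂ)]

/-- Kraus operator E₁(τ). -/
def E₁ (γ τ : ℝ) : Matrix (Fin 2) (Fin 2) ℂ :=
  !![0, (Real.sqrt (pAD γ τ) : ℂ); 0, 0]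

/-- The amplitude-damping channel Φ^τ. -/
def ΦAD (γ τ : ℝ) (ρ : Matrix (Fin 2) (Fin 2) ℂ) : Matrix (Fin 2) (Fin 2) ℂ :=
  E₀ γ τ * ρ * (E₀ γ τ)ᴴ + E₁ γ τ * ρ * (E₁ γ τ)ᴴ

/-- The unitary propagator U = exp(−i Δt H(u)). -/
def Uprop (Δt u : ℝ) : Matrix (Fin 2) (Fin 2) ℂ :=
  NormedSpace.exp ((-Complex.I * (Δt : ℂ)) • Hctrl u)

/-- The Strang-split Lindblad integrator F⁽²⁾(ρ, u). -/
def Fstrang (γ Δt : ℝ) (ρ : Matrix (Fin 2) (Fin 2) ℂ) (u : ℝ) : Matrix (Fin 2) (Fin 2) ℂ :=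
  ΦAD γ (Δt / 2) (Uprop Δt u * ΦAD γ (Δt / 2) ρ * (Uprop Δt u)ᴴ)

/-!
Each of the three factors of `Fstrang` is a Kraus map `ρ ↦ ∑ₖ Kₖ ρ Kₖᴴ`: the damping channel has
Kraus operators `E₀, E₁` with `E₀ᴴE₀ + E₁ᴴE₁ = diag(1, (1 - p) + p) = 1`, and the unitary step has
the single Kraus operator `U`, unitary as the exponential of the skew-Hermitian matrix `-iΔt H(u)`.
Congruences `ρ ↦ K ρ Kᴴ` preserve Hermiticity and positive semidefiniteness, and completeness
`∑ₖ Kₖᴴ Kₖ = 1` gives trace preservation by cyclicity of the trace.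
-/

namespace Matrix

variable {n R : Type*} [Fintype n] [DecidableEq n] [CommSemiring R] [StarRing R]

theorem trace_mul_mul_conjTranspose_add_mul_mul_conjTranspose {A B : Matrix n n R}
    (hAB : Aᴴ * A + Bᴴ * B = 1) (ρ : Matrix n n R) :
    (A * ρ * Aᴴ + B * ρ * Bᴴ).trace = ρ.trace := by
  rw [trace_add, trace_mul_cycle, trace_mul_cycle B, ← trace_add, ← add_mul, hAB, one_mul]

theorem trace_mul_mul_conjTranspose_of_mem_unitary {U : Matrix n n R}
    (hU : U ∈ unitary (Matrix n n R)) (ρ : Matrix n n R) :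
    (U * ρ * Uᴴ).trace = ρ.trace := by
  rw [trace_mul_cycle, ← star_eq_conjTranspose, Unitary.star_mul_self_of_mem hU, one_mul]

theorem exp_mem_unitary_of_mem_skewAdjoint {𝔸 : Type*} [NormedRing 𝔸] [NormedAlgebra ℚ 𝔸]
    [CompleteSpace 𝔸] [StarRing 𝔸] [ContinuousStar 𝔸]
    {A : Matrix n n 𝔸} (hA : A ∈ skewAdjoint (Matrix n n 𝔸)) :
    NormedSpace.exp A ∈ unitary (Matrix n n 𝔸) := by
  rw [Unitary.mem_iff, star_eq_conjTranspose, ← exp_conjTranspose, ← star_eq_conjTranspose,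
    skewAdjoint.mem_iff.mp hA, ← exp_add_of_commute _ _ (Commute.refl A).neg_left,
    ← exp_add_of_commute _ _ (Commute.refl A).neg_right,
    neg_add_cancel, add_neg_cancel, NormedSpace.exp_zero, and_self]

end Matrix

theorem Hctrl_isSelfAdjoint (u : ℝ) : IsSelfAdjoint (Hctrl u) := by
  ext i j
  fin_cases i <;> fin_cases j <;> simp [Hctrl, σx]

theorem Uprop_mem_unitary (Δt u : ℝ) : Uprop Δt u ∈ unitary (Matrix (Fin 2) (Fin 2) ℂ) :=
  exp_mem_unitary_of_mem_skewAdjoint <|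
    (Hctrl_isSelfAdjoint u).smul_mem_skewAdjoint <|
      skewAdjoint.mem_iff.mpr (by simp)

theorem one_sub_pAD (γ τ : ℝ) : 1 - pAD γ τ = Real.exp (-(γ * τ)) := sub_sub_cancel _ _

theorem pAD_nonneg {γ τ : ℝ} (h : 0 ≤ γ * τ) : 0 ≤ pAD γ τ := by
  rw [pAD, sub_nonneg]
  exact Real.exp_le_one_iff.mpr (neg_nonpos.mpr h)

theorem E₀_conjTranspose_mul_add_E₁_conjTranspose_mul {γ τ : ℝ} (h : 0 ≤ γ * τ) :
    (E₀ γ τ)ᴴ * E₀ γ τ + (E₁ γ τ)ᴴ * E₁ γ τ = 1 := by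
  have h₀ : √(1 - pAD γ τ) * √(1 - pAD γ τ) = 1 - pAD γ τ :=
    Real.mul_self_sqrt (one_sub_pAD γ τ ▸ (Real.exp_pos _).le)
  have h₁ : √(pAD γ τ) * √(pAD γ τ) = pAD γ τ := Real.mul_self_sqrt (pAD_nonneg h)
  ext i j
  fin_cases i <;> fin_cases j <;>
    simp [E₀, E₁, mul_apply, Fin.sum_univ_two, ← Complex.ofReal_mul, h₀, h₁]

theorem trace_ΦAD {γ τ : ℝ} (h : 0 ≤ γ * τ) (ρ : Matrix (Fin 2) (Fin 2) ℂ) :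
    (ΦAD γ τ ρ).trace = ρ.trace :=
  trace_mul_mul_conjTranspose_add_mul_mul_conjTranspose
    (E₀_conjTranspose_mul_add_E₁_conjTranspose_mul h) ρ

theorem isHermitian_ΦAD (γ τ : ℝ) {ρ : Matrix (Fin 2) (Fin 2) ℂ} (h : ρ.IsHermitian) :
    (ΦAD γ τ ρ).IsHermitian :=
  (isHermitian_mul_mul_conjTranspose _ h).add (isHermitian_mul_mul_conjTranspose _ h)

theorem posSemidef_ΦAD (γ τ : ℝ) {ρ : Matrix (Fin 2) (Fin 2) ℂ} (h : ρ.PosSemidef) :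
    (ΦAD γ τ ρ).PosSemidef :=
  (h.mul_mul_conjTranspose_same _).add (h.mul_mul_conjTranspose_same _)

/-- The Strang-split Lindblad integrator is trace-preserving, Hermiticity-preserving and
positivity-preserving step by step. -/
theorem strang_step_CPTP (γ Δt : ℝ) (hγ : 0 < γ) (hΔt : 0 < Δt) (u : ℝ)
    (ρ : Matrix (Fin 2) (Fin 2) ℂ) :
    (Fstrang γ Δt ρ u).trace = ρ.trace ∧
      (ρ.IsHermitian → (Fstrang γ Δt ρ u).IsHermitian) ∧
      (ρ.PosSemidef → (Fstrang γ Δt ρ u).PosSemidef) := by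
  have hτ : 0 ≤ γ * (Δt / 2) := by positivity
  refine ⟨?_, fun hρ => ?_, fun hρ => ?_⟩
  · rw [Fstrang, trace_ΦAD hτ,
      trace_mul_mul_conjTranspose_of_mem_unitary (Uprop_mem_unitary Δt u), trace_ΦAD hτ]
  · exact isHermitian_ΦAD _ _ (isHermitian_mul_mul_conjTranspose _ (isHermitian_ΦAD _ _ hρ))
  · exact posSemidef_ΦAD _ _ ((posSemidef_ΦAD _ _ hρ).mul_mul_conjTranspose_same _)
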